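/- arXiv:1008.3217 — 2 statements merged into one kernel-verified Lean document; each statement's English description precedes it below -/
import Mathlib

section
/- Let m ≤ n be natural numbers with m odd and n even. Then γ'_s(K_{m,n}) = min(3m − 1, max(2m, n)). -/
open scoped Classical

noncomputable def edgeFin {V : Type*} [Fintype V] (G : SimpleGraph V) : Finset (Sym2 V) :=
  Finset.univ.filter (· ∈ G.edgeSet)

noncomputable def closedNbhd {V : Type*} [Fintype V] (G : SimpleGraph V) (e : Sym2 V) :
    Finset (Sym2 V) :=
  (edgeFin G).filter (fun e' => ∃ v, v ∈ e ∧ v ∈ e')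

def IsSEDF {V : Type*} [Fintype V] (G : SimpleGraph V) (f : Sym2 V → ℤ) : Prop :=
  (∀ e ∈ edgeFin G, f e = 1 ∨ f e = -1) ∧
  ∀ e ∈ edgeFin G, 1 ≤ ∑ e' ∈ closedNbhd G e, f e'

noncomputable def vsum {V : Type*} [Fintype V] (G : SimpleGraph V) (f : Sym2 V → ℤ) (v : V) : ℤ :=
  ∑ e ∈ (edgeFin G).filter (fun e => v ∈ e), f e

noncomputable def gammaS {V : Type*} [Fintype V] (G : SimpleGraph V) : ℤ :=
  sInf {z : ℤ | ∃ f, IsSEDF G f ∧ z = ∑ e ∈ edgeFin G, f e}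

def IsLGraph {V : Type*} [Fintype V] (m n : ℕ) (G : SimpleGraph V) : Prop :=
  Fintype.card V = (n + 1) * (m * n + m + 1) ∧
  ∃ P : Fin (n + 1) → Finset V,
    (∀ v : V, ∃! i, v ∈ P i) ∧
    (∀ i, (P i).card = m * n + m + 1) ∧
    (∀ u ∈ P 0, ∀ v ∈ P 0, u ≠ v → G.Adj u v) ∧
    (∀ i, i ≠ 0 → ∀ u ∈ P i, ∀ v ∈ P i, ¬ G.Adj u v) ∧
    (∀ i, i ≠ 0 → ∀ v ∈ P i, ((P 0).filter (G.Adj v)).card = m) ∧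
    (∀ i, i ≠ 0 → ∀ v ∈ P 0, ((P i).filter (G.Adj v)).card = m) ∧
    (∀ i j, i ≠ 0 → j ≠ 0 → i ≠ j → ∀ u ∈ P i, ∀ v ∈ P j, ¬ G.Adj u v)

def MConnected {V : Type*} [Fintype V] (m : ℕ) (G : SimpleGraph V) : Prop :=
  m < Fintype.card V ∧
  ∀ S : Finset V, S.card < m → (G.induce ((↑S : Set V)ᶜ)).Connected

def IsElementary {V : Type*} (H : SimpleGraph V) : Prop :=
  (∀ v, (H.neighborSet v).ncard ≤ 2) ∧
  ∀ v, (H.neighborSet v).ncard = 1 → ∀ w, H.Adj v w → (H.neighborSet w).ncard = 1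

/-!
An edge function on `K_{m,n}` is an `m × n` sign matrix `g`, and the closed neighbourhood of the
edge `ij` is row `i` together with column `j`, so the domination condition reads
`R i + C j - g i j ≥ 1` for the row and column sums `R`, `C`. Since `n` is even and `m` odd,
`R i` is even and `C j` odd, which upgrades the condition to `≥ 2`. Summing it along a row with
`R i ≤ 0` bounds the total below by `2n`; along a column with `C j ≤ -1`, by `3m - 1`; and if
there is neither, `R ≥ 2` and `C ≥ 1` give `max (2m) n`. The matching constructions prescribe the
number of `+1`s in each row and fill the rows cyclically modulo the number of columns, which
makes all column sums equal.
-/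

open Finset

def IsSEDFMatrix {ι κ : Type*} [Fintype ι] [Fintype κ] (g : ι → κ → ℤ) : Prop :=
  (∀ i j, g i j = 1 ∨ g i j = -1) ∧ ∀ i j, 1 ≤ ∑ j', g i j' + ∑ i', g i' j - g i j

section Reduction

variable {α β : Type*} [Fintype α] [Fintype β]

lemma edgeFin_completeBipartiteGraph :
    edgeFin (completeBipartiteGraph α β) =
      univ.image (fun p : α × β => s(Sum.inl p.1, Sum.inr p.2)) := by
  ext e
  induction e using Sym2.ind with
  | _ x y =>
    simp only [edgeFin, mem_filter, mem_univ, true_and, SimpleGraph.mem_edgeSet,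
      completeBipartiteGraph_adj, mem_image, Prod.exists]
    constructor
    · rintro (⟨hx, hy⟩ | ⟨hx, hy⟩)
      · obtain ⟨i, rfl⟩ := Sum.isLeft_iff.1 hx
        obtain ⟨j, rfl⟩ := Sum.isRight_iff.1 hy
        exact ⟨i, j, rfl⟩
      · obtain ⟨j, rfl⟩ := Sum.isRight_iff.1 hx
        obtain ⟨i, rfl⟩ := Sum.isLeft_iff.1 hy
        exact ⟨i, j, Sym2.eq_swap⟩
    · rintro ⟨i, j, h⟩
      rcases Sym2.eq_iff.1 h with ⟨rfl, rfl⟩ | ⟨rfl, rfl⟩ <;> simp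

omit [Fintype α] [Fintype β] in
lemma injective_sym2_inl_inr :
    Function.Injective (fun p : α × β => s(Sum.inl p.1, Sum.inr p.2)) := by
  rintro ⟨i, j⟩ ⟨i', j'⟩ h
  simpa using h

lemma sum_edgeFin_completeBipartiteGraph (f : Sym2 (α ⊕ β) → ℤ) :
    ∑ e ∈ edgeFin (completeBipartiteGraph α β), f e = ∑ i, ∑ j, f s(Sum.inl i, Sum.inr j) := by
  rw [edgeFin_completeBipartiteGraph, sum_image fun _ _ _ _ h => injective_sym2_inl_inr h,
    Fintype.sum_prod_type]

lemma closedNbhd_completeBipartiteGraph (i : α) (j : β) :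
    closedNbhd (completeBipartiteGraph α β) s(Sum.inl i, Sum.inr j) =
      (({i} ×ˢ univ) ∪ (univ ×ˢ {j})).image (fun p : α × β => s(Sum.inl p.1, Sum.inr p.2)) := by
  ext e
  simp only [closedNbhd, edgeFin_completeBipartiteGraph, mem_filter, mem_image, mem_univ,
    true_and, mem_union, mem_product, mem_singleton, Prod.exists]
  constructor
  · rintro ⟨⟨i', j', rfl⟩, v, hv, hv'⟩
    refine ⟨i', j', ?_, rfl⟩
    simp only [Sym2.mem_iff] at hv hv'
    rcases hv with rfl | rfl <;> simp_all
  · rintro ⟨i', j', h, rfl⟩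
    refine ⟨⟨i', j', rfl⟩, ?_⟩
    rcases h with ⟨rfl, -⟩ | ⟨-, rfl⟩
    · exact ⟨Sum.inl i', by simp, by simp⟩
    · exact ⟨Sum.inr j, by simp, by simp⟩

lemma sum_closedNbhd_completeBipartiteGraph (f : Sym2 (α ⊕ β) → ℤ) (i : α) (j : β) :
    ∑ e ∈ closedNbhd (completeBipartiteGraph α β) s(Sum.inl i, Sum.inr j), f e =
      ∑ j', f s(Sum.inl i, Sum.inr j') + ∑ i', f s(Sum.inl i', Sum.inr j) -
        f s(Sum.inl i, Sum.inr j) := by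
  have hinter : ({i} ×ˢ univ) ∩ (univ ×ˢ {j}) = {(i, j)} := by
    ext ⟨i', j'⟩
    simp [eq_comm]
  rw [closedNbhd_completeBipartiteGraph, sum_image fun _ _ _ _ h => injective_sym2_inl_inr h,
    eq_sub_iff_add_eq, ← sum_singleton (fun p : α × β => f s(Sum.inl p.1, Sum.inr p.2)) (i, j),
    ← hinter, sum_union_inter, sum_product, sum_product_right, sum_singleton, sum_singleton]

def edgeFunOfMatrix (g : α → β → ℤ) : Sym2 (α ⊕ β) → ℤ :=
  Sym2.lift ⟨Sum.elim (fun i => Sum.elim (fun _ => 0) (g i))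
    (fun j => Sum.elim (fun i => g i j) (fun _ => 0)), by rintro (i | j) (i' | j') <;> rfl⟩

omit [Fintype α] [Fintype β] in
@[simp]
lemma edgeFunOfMatrix_apply (g : α → β → ℤ) (i : α) (j : β) :
    edgeFunOfMatrix g s(Sum.inl i, Sum.inr j) = g i j :=
  rfl

lemma gammaS_completeBipartiteGraph :
    gammaS (completeBipartiteGraph α β) =
      sInf {z : ℤ | ∃ g : α → β → ℤ, IsSEDFMatrix g ∧ z = ∑ i, ∑ j, g i j} := by
  have hmem : ∀ e ∈ edgeFin (completeBipartiteGraph α β), ∃ i j, e = s(Sum.inl i, Sum.inr j) := by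
    simp [edgeFin_completeBipartiteGraph, eq_comm]
  have hedge : ∀ i j, s(Sum.inl i, Sum.inr j) ∈ edgeFin (completeBipartiteGraph α β) := by
    simp [edgeFin_completeBipartiteGraph]
  rw [gammaS]
  congr 1
  ext z
  constructor
  · rintro ⟨f, ⟨hpm, hdom⟩, rfl⟩
    refine ⟨fun i j => f s(Sum.inl i, Sum.inr j), ⟨fun i j => hpm _ (hedge i j), fun i j => ?_⟩,
      sum_edgeFin_completeBipartiteGraph f⟩
    simpa only [sum_closedNbhd_completeBipartiteGraph] using hdom _ (hedge i j)
  · rintro ⟨g, ⟨hpm, hdom⟩, rfl⟩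
    refine ⟨edgeFunOfMatrix g, ⟨fun e he => ?_, fun e he => ?_⟩, ?_⟩
    · obtain ⟨i, j, rfl⟩ := hmem e he
      simpa using hpm i j
    · obtain ⟨i, j, rfl⟩ := hmem e he
      simpa [sum_closedNbhd_completeBipartiteGraph] using hdom i j
    · simp [sum_edgeFin_completeBipartiteGraph]

end Reduction

lemma even_sum_iff_of_forall_eq_one_or_neg_one {α : Type*} {s : Finset α} {f : α → ℤ}
    (hf : ∀ x ∈ s, f x = 1 ∨ f x = -1) : Even (∑ x ∈ s, f x) ↔ Even (#s : ℤ) := by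
  have h : Even (∑ x ∈ s, (f x + 1)) :=
    even_sum _ fun x hx => by rcases hf x hx with h | h <;> simp [h]
  rwa [sum_add_distrib, sum_const, nsmul_one, Int.even_add] at h

section LowerBound

variable {ι κ : Type*} [Fintype ι] [Fintype κ] {g : ι → κ → ℤ}

lemma IsSEDFMatrix.transpose (hg : IsSEDFMatrix g) : IsSEDFMatrix (fun j i => g i j) :=
  ⟨fun j i => hg.1 i j, fun j i => by linarith [hg.2 i j]⟩

lemma IsSEDFMatrix.two_le (hg : IsSEDFMatrix g) (hodd : Odd (Fintype.card ι + Fintype.card κ))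
    (i : ι) (j : κ) : 2 ≤ ∑ j', g i j' + ∑ i', g i' j - g i j := by
  have hrow := even_sum_iff_of_forall_eq_one_or_neg_one (s := univ) fun j _ => hg.1 i j
  have hcol := even_sum_iff_of_forall_eq_one_or_neg_one (s := univ) fun i _ => hg.1 i j
  have hentry : ¬ Even (g i j) := by rcases hg.1 i j with h | h <;> simp [h]
  have heven : Even (∑ j', g i j' + ∑ i', g i' j - g i j) := by
    rw [Int.even_sub, Int.even_add, hrow, hcol, card_univ, card_univ, Int.even_coe_nat,
      Int.even_coe_nat, iff_false_right hentry]
    rw [Nat.odd_add, ← Nat.not_even_iff_odd] at hodd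
    tauto
  obtain ⟨r, hr⟩ := heven
  have := hg.2 i j
  omega

lemma le_sum_of_two_le_row (i₀ : ι) (h : ∀ j, 2 ≤ ∑ j', g i₀ j' + ∑ i, g i j - g i₀ j) :
    2 * (Fintype.card κ : ℤ) - (Fintype.card κ - 1) * ∑ j, g i₀ j ≤ ∑ i, ∑ j, g i j :=
  calc 2 * (Fintype.card κ : ℤ) - (Fintype.card κ - 1) * ∑ j, g i₀ j
      = ∑ j, (2 - ∑ j', g i₀ j' + g i₀ j) := by
        simp only [sum_add_distrib, sum_sub_distrib, sum_const, card_univ, nsmul_eq_mul]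
        ring
    _ ≤ ∑ j, ∑ i, g i j := sum_le_sum fun j _ => by linarith [h j]
    _ = ∑ i, ∑ j, g i j := sum_comm

lemma IsSEDFMatrix.two_mul_card_le_sum_of_rowSum_nonpos (hg : IsSEDFMatrix g)
    (hodd : Odd (Fintype.card ι + Fintype.card κ)) (hκ : 0 < Fintype.card κ) {i₀ : ι}
    (hi₀ : ∑ j, g i₀ j ≤ 0) : 2 * (Fintype.card κ : ℤ) ≤ ∑ i, ∑ j, g i j := by
  have hS := le_sum_of_two_le_row i₀ (hg.two_le hodd i₀)
  have hκ' : (1 : ℤ) ≤ Fintype.card κ := by exact_mod_cast hκ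
  nlinarith

lemma IsSEDFMatrix.three_mul_card_sub_one_le_sum_of_colSum_neg (hg : IsSEDFMatrix g)
    (hodd : Odd (Fintype.card ι + Fintype.card κ)) (hι : 0 < Fintype.card ι) {j₀ : κ}
    (hj₀ : ∑ i, g i j₀ ≤ -1) : 3 * (Fintype.card ι : ℤ) - 1 ≤ ∑ i, ∑ j, g i j := by
  have hS := le_sum_of_two_le_row (g := fun j i => g i j) j₀
    (hg.transpose.two_le (by rwa [add_comm]) j₀)
  rw [sum_comm] at hS
  have hι' : (1 : ℤ) ≤ Fintype.card ι := by exact_mod_cast hι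
  nlinarith

lemma IsSEDFMatrix.min_le_sum (hg : IsSEDFMatrix g)
    (hcard : Fintype.card ι ≤ Fintype.card κ) (hι : Odd (Fintype.card ι))
    (hκ : Even (Fintype.card κ)) :
    min (3 * (Fintype.card ι : ℤ) - 1) (max (2 * (Fintype.card ι : ℤ)) (Fintype.card κ)) ≤
      ∑ i, ∑ j, g i j := by
  have hodd : Odd (Fintype.card ι + Fintype.card κ) := hι.add_even hκ
  have hmn : (Fintype.card ι : ℤ) ≤ Fintype.card κ := by exact_mod_cast hcard
  by_cases hR : ∃ i, ∑ j, g i j ≤ 0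
  · obtain ⟨i₀, hi₀⟩ := hR
    have := hg.two_mul_card_le_sum_of_rowSum_nonpos hodd (hι.pos.trans_le hcard) hi₀
    exact min_le_of_right_le (max_le (by linarith) (by linarith))
  by_cases hC : ∃ j, ∑ i, g i j ≤ -1
  · obtain ⟨j₀, hj₀⟩ := hC
    exact min_le_of_left_le (hg.three_mul_card_sub_one_le_sum_of_colSum_neg hodd hι.pos hj₀)
  simp only [not_exists, not_le] at hR hC
  have hrow : ∀ i, 2 ≤ ∑ j, g i j := fun i => by
    obtain ⟨r, hr⟩ := (even_sum_iff_of_forall_eq_one_or_neg_one (s := univ)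
      fun j _ => hg.1 i j).2 (by simpa using hκ)
    have := hR i
    omega
  have hcol : ∀ j, 1 ≤ ∑ i, g i j := fun j => by
    obtain ⟨r, hr⟩ := Int.not_even_iff_odd.1 <| (even_sum_iff_of_forall_eq_one_or_neg_one
      (s := univ) fun i _ => hg.1 i j).not.2 (by simpa using hι)
    have := hC j
    omega
  have h2m : 2 * (Fintype.card ι : ℤ) ≤ ∑ i, ∑ j, g i j := by
    simpa [mul_comm] using sum_le_sum fun i (_ : i ∈ univ) => hrow i
  have hn : (Fintype.card κ : ℤ) ≤ ∑ i, ∑ j, g i j := by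
    rw [sum_comm]
    simpa using sum_le_sum fun j (_ : j ∈ univ) => hcol j
  exact min_le_of_right_le (max_le h2m hn)

end LowerBound

section CyclicFilling

variable (N : ℕ) (k : ℕ → ℕ)

/- Row `i` occupies the `k i` cells of `ℕ` from `∑ l < i, k l` on, and cell `x` lies in column
`x % N`. With `k i ≤ N` every entry is `0` or `1`, and column `j` receives every cell
`x < ∑ l < M, k l` with `x % N = j`. -/
def cyclicEntry (i j : ℕ) : ℕ :=
  #{x ∈ Ico (∑ l ∈ range i, k l) (∑ l ∈ range (i + 1), k l) | x % N = j}

variable {N k}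

lemma cyclicEntry_le_one {i : ℕ} (hk : k i ≤ N) (j : ℕ) : cyclicEntry N k i j ≤ 1 := by
  refine card_le_one.2 fun x hx y hy => ?_
  simp only [mem_filter, mem_Ico, sum_range_succ] at hx hy
  refine Nat.ModEq.eq_of_abs_lt (hx.2.trans hy.2.symm) ?_
  rw [abs_sub_lt_iff]
  omega

lemma sum_cyclicEntry_row (hN : 0 < N) (i : ℕ) : ∑ j ∈ range N, cyclicEntry N k i j = k i := by
  unfold cyclicEntry
  rw [← card_eq_sum_card_fiberwise fun x _ => mem_range.2 (Nat.mod_lt x hN),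
    Nat.card_Ico, sum_range_succ, Nat.add_sub_cancel_left]

lemma sum_cyclicEntry_col (M : ℕ) (j : ℕ) :
    ∑ i ∈ range M, cyclicEntry N k i j = #{x ∈ range (∑ l ∈ range M, k l) | x % N = j} := by
  induction M with
  | zero => simp
  | succ M ih =>
    rw [sum_range_succ, ih, cyclicEntry, ← Nat.Ico_zero_eq_range, ← Nat.Ico_zero_eq_range,
      ← card_union_of_disjoint (disjoint_filter_filter (Ico_disjoint_Ico_consecutive _ _ _)),
      ← filter_union, Ico_union_Ico_eq_Ico (Nat.zero_le _) (by simp [sum_range_succ]),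
      Nat.Ico_zero_eq_range]

lemma card_filter_mod_eq_range_mul (hN : 0 < N) (a : ℕ) {j : ℕ} (hj : j < N) :
    #{x ∈ range (N * a) | x % N = j} = a := by
  have := Nat.count_modEq_card (N * a) hN j
  rw [Nat.count_eq_card_filter_range] at this
  simpa [Nat.ModEq, Nat.mod_eq_of_lt hj, Nat.mul_div_cancel_left _ hN] using this

lemma exists_pm_one_matrix_of_rowCounts (M a : ℕ) (hN : 0 < N) (hk : ∀ i < M, k i ≤ N)
    (hsum : ∑ i ∈ range M, k i = N * a) :
    ∃ B : Fin M → Fin N → ℤ, (∀ i j, B i j = 1 ∨ B i j = -1) ∧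
      (∀ i, ∑ j, B i j = 2 * (k i : ℤ) - N) ∧ ∀ j, ∑ i, B i j = 2 * (a : ℤ) - M := by
  refine ⟨fun i j => 2 * (cyclicEntry N k i j : ℤ) - 1, fun i j => ?_, fun i => ?_, fun j => ?_⟩
  · obtain h | h : cyclicEntry N k i j = 0 ∨ cyclicEntry N k i j = 1 := by
      have := cyclicEntry_le_one (hk i i.isLt) j
      omega
    all_goals simp [h]
  · rw [Fin.sum_univ_eq_sum_range (fun j => 2 * (cyclicEntry N k i j : ℤ) - 1), sum_sub_distrib,
      ← mul_sum, ← Nat.cast_sum, sum_cyclicEntry_row hN]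
    simp
  · rw [Fin.sum_univ_eq_sum_range (fun i => 2 * (cyclicEntry N k i j : ℤ) - 1), sum_sub_distrib,
      ← mul_sum, ← Nat.cast_sum, sum_cyclicEntry_col, hsum, card_filter_mod_eq_range_mul hN a j.isLt]
    simp

end CyclicFilling

lemma sum_range_ite_lt {M : Type*} [AddCommMonoid M] {c n : ℕ} (hc : c ≤ n) (p q : M) :
    ∑ x ∈ range n, (if x < c then p else q) = c • p + (n - c) • q := by
  obtain ⟨n, rfl⟩ := Nat.exists_eq_add_of_le hc
  rw [sum_range_add, sum_ite_of_true fun x hx => mem_range.1 hx,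
    sum_ite_of_false fun x _ => by omega]
  simp

section UpperBound

lemma isSEDFMatrix_of_two_le_add {ι κ : Type*} [Fintype ι] [Fintype κ] {g : ι → κ → ℤ}
    (hpm : ∀ i j, g i j = 1 ∨ g i j = -1) (h : ∀ i j, 2 ≤ ∑ j', g i j' + ∑ i', g i' j) :
    IsSEDFMatrix g :=
  ⟨hpm, fun i j => by rcases hpm i j with hij | hij <;> linarith [h i j]⟩

lemma exists_isSEDFMatrix_of_rowCounts (M N a : ℕ) (k : ℕ → ℕ) (hN : 0 < N)
    (hk : ∀ i < M, k i ≤ N) (hsum : ∑ i ∈ range M, k i = N * a)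
    (hdom : ∀ i < M, M + N + 2 ≤ 2 * (k i + a)) :
    ∃ B : Fin M → Fin N → ℤ, IsSEDFMatrix B ∧ ∑ i, ∑ j, B i j = N * (2 * (a : ℤ) - M) := by
  obtain ⟨B, hpm, hrow, hcol⟩ := exists_pm_one_matrix_of_rowCounts M a hN hk hsum
  refine ⟨B, isSEDFMatrix_of_two_le_add hpm fun i j => ?_, ?_⟩
  · have := hdom i i.isLt
    rw [hrow, hcol]
    omega
  · rw [sum_comm]
    simp [hcol, mul_sub]

variable {m n : ℕ}

lemma exists_isSEDFMatrix_sum_eq_two_mul (hm : Odd m) (hn : Even n) (hmn : m ≤ n)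
    (h : n ≤ 2 * m) : ∃ g : Fin m → Fin n → ℤ, IsSEDFMatrix g ∧ ∑ i, ∑ j, g i j = 2 * m := by
  obtain ⟨c, rfl⟩ := hm
  obtain ⟨d, rfl⟩ := hn
  obtain ⟨B, hB, hsum⟩ := exists_isSEDFMatrix_of_rowCounts (d + d) (2 * c + 1) (d + 1)
    (fun x => if x < 1 then 3 * c + 2 - d else c + 1) (by omega)
    (fun i _ => by split <;> omega) (by
      rw [sum_range_ite_lt (by omega), smul_eq_mul, smul_eq_mul]
      zify [show d ≤ 3 * c + 2 by omega, show 1 ≤ d + d by omega]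
      ring)
    (fun i _ => by split <;> omega)
  refine ⟨fun i j => B j i, hB.transpose, ?_⟩
  rw [sum_comm, hsum]
  push_cast
  ring

lemma exists_isSEDFMatrix_sum_eq_card (hm : Odd m) (hn : Even n) (h : 2 * m ≤ n) :
    ∃ g : Fin m → Fin n → ℤ, IsSEDFMatrix g ∧ ∑ i, ∑ j, g i j = n := by
  obtain ⟨c, rfl⟩ := hm
  obtain ⟨d, rfl⟩ := hn
  obtain ⟨B, hB, hsum⟩ := exists_isSEDFMatrix_of_rowCounts (2 * c + 1) (d + d) (c + 1)
    (fun x => if x < 1 then d + d - 2 * c else d + 1) (by omega)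
    (fun i _ => by split <;> omega) (by
      rw [sum_range_ite_lt (by omega), smul_eq_mul, smul_eq_mul, Nat.add_sub_cancel]
      zify [show 2 * c ≤ d + d by omega]
      ring)
    (fun i _ => by split <;> omega)
  refine ⟨B, hB, ?_⟩
  rw [hsum]
  push_cast
  ring

lemma sum_fin_ite_lt (c : ℕ) (p q : ℤ) :
    ∑ i : Fin (2 * c + 1), (if (i : ℕ) < c then p else q) = c * p + (c + 1) * q := by
  rw [Fin.sum_univ_eq_sum_range (fun i => if i < c then p else q), sum_range_ite_lt (by omega),
    show 2 * c + 1 - c = c + 1 by omega, nsmul_eq_mul, nsmul_eq_mul]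
  push_cast
  ring

/- `t` columns `(+1, …, +1, -1, …, -1)` (`c` plus signs) next to a cyclic block with column
sums `1`. This is the equality case of the column bound: a column with sum `-1` forces row
sums `4` at its `+1` entries and `2` at its `-1` entries. -/
lemma exists_signMatrix_rowSum_four_or_two (c t : ℕ) :
    ∃ g : Fin (2 * c + 1) → Fin (t + (t + 6 * c + 2)) → ℤ, (∀ i j, g i j = 1 ∨ g i j = -1) ∧
      (∀ i, ∑ j, g i j = if (i : ℕ) < c then 4 else 2) ∧
      ∀ j, (∑ i, g i j = -1 ∧ ∀ i, g i j = if (i : ℕ) < c then 1 else -1) ∨ ∑ i, g i j = 1 := by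
  obtain ⟨B, hBpm, hBrow, hBcol⟩ := exists_pm_one_matrix_of_rowCounts (N := t + 6 * c + 2)
    (k := fun i => if i < c then 3 * c + 3 else t + 3 * c + 2) (2 * c + 1) (c + 1) (by omega)
    (fun i _ => by split <;> omega) (by
      rw [sum_range_ite_lt (by omega), smul_eq_mul, smul_eq_mul,
        show 2 * c + 1 - c = c + 1 by omega]
      ring)
  set g : Fin (2 * c + 1) → Fin (t + (t + 6 * c + 2)) → ℤ :=
    fun i => Fin.append (fun _ => if (i : ℕ) < c then 1 else -1) (B i)
  have hgL : ∀ i j, g i (Fin.castAdd _ j) = if (i : ℕ) < c then 1 else -1 :=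
    fun i j => Fin.append_left _ _ j
  have hgR : ∀ i j, g i (Fin.natAdd t j) = B i j := fun i j => Fin.append_right _ _ j
  refine ⟨g, fun i j => ?_, fun i => ?_, fun j => ?_⟩
  · refine Fin.addCases (fun j => ?_) (fun j => ?_) j
    · rw [hgL]
      split <;> simp
    · rw [hgR]
      exact hBpm i j
  · rw [Fin.sum_univ_add]
    simp only [hgL, hgR, hBrow, sum_const, card_univ, Fintype.card_fin, nsmul_eq_mul]
    split <;> push_cast <;> ring
  · refine Fin.addCases (fun j => Or.inl ⟨?_, fun i => hgL i j⟩) (fun j => Or.inr ?_) j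
    · rw [sum_congr rfl fun i _ => hgL i j, sum_fin_ite_lt]
      ring
    · simp only [hgR, hBcol]
      push_cast
      ring

lemma exists_isSEDFMatrix_sum_eq_three_mul_sub_one (hm : Odd m) (hn : Even n)
    (h : 3 * m - 1 ≤ n) :
    ∃ g : Fin m → Fin n → ℤ, IsSEDFMatrix g ∧ ∑ i, ∑ j, g i j = 3 * m - 1 := by
  obtain ⟨c, rfl⟩ := hm
  obtain ⟨t, rfl⟩ : ∃ t, n = t + (t + 6 * c + 2) := by
    obtain ⟨d, rfl⟩ := hn
    exact ⟨d - 3 * c - 1, by omega⟩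
  obtain ⟨g, hpm, hrow, hcol⟩ := exists_signMatrix_rowSum_four_or_two c t
  refine ⟨g, ⟨hpm, fun i j => ?_⟩, ?_⟩
  · rw [hrow]
    rcases hcol j with ⟨hC, hgj⟩ | hC
    · rw [hC, hgj]
      split <;> norm_num
    · rw [hC]
      rcases hpm i j with h | h <;> split <;> omega
  · rw [sum_congr rfl fun i _ => hrow i, sum_fin_ite_lt]
    push_cast
    ring

end UpperBound

lemma exists_isSEDFMatrix_sum_eq {m n : ℕ} (hmn : m ≤ n) (hm : Odd m) (hn : Even n) :
    ∃ g : Fin m → Fin n → ℤ, IsSEDFMatrix g ∧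
      ∑ i, ∑ j, g i j = min (3 * (m : ℤ) - 1) (max (2 * (m : ℤ)) n) := by
  have hm1 := hm.pos
  rcases le_total n (2 * m) with h₁ | h₁
  · rw [max_eq_left (by omega), min_eq_right (by omega)]
    exact exists_isSEDFMatrix_sum_eq_two_mul hm hn hmn h₁
  rcases le_total n (3 * m - 1) with h₂ | h₂
  · rw [max_eq_right (by omega), min_eq_right (by omega)]
    exact exists_isSEDFMatrix_sum_eq_card hm hn h₁
  · rw [min_eq_left (by omega)]
    exact exists_isSEDFMatrix_sum_eq_three_mul_sub_one hm hn h₂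

theorem stmt16 (m n : ℕ) (hmn : m ≤ n) (hm : Odd m) (hn : Even n) :
    gammaS (completeBipartiteGraph (Fin m) (Fin n)) =
      min (3 * (m : ℤ) - 1) (max (2 * (m : ℤ)) (n : ℤ)) := by
  rw [gammaS_completeBipartiteGraph]
  obtain ⟨g, hg, hsum⟩ := exists_isSEDFMatrix_sum_eq hmn hm hn
  refine IsLeast.csInf_eq ⟨⟨g, hg, hsum.symm⟩, ?_⟩
  rintro z ⟨g', hg', rfl⟩
  simpa using hg'.min_le_sum (by simpa using hmn) (by simpa using hm) (by simpa using hn)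
end

section
/- There exists a 2-connected graph G on 10 vertices with γ'_s(G) = 0; namely, the L_(2,1)-graph consisting of a complete graph K_5 on V_1 together with 5 additional vertices each joined to V_1 by edges forming 2 disjoint perfect matchings (so each added vertex has degree 2 and each K_5-vertex gains degree 2). -/
/-! The L(2,1) graph is `K₅` on `{0, …, 4}` together with vertices `5 + i` joined to `i` and to
`i + 1 mod 5`. It has the Hamiltonian cycle `0, 5, 1, 6, 2, 7, 3, 8, 4, 9`, so it is 2-connected.
Signing the ten clique edges `+1` and the ten matching edges `-1` gives a signed edge dominating
function of weight `0`. Conversely, each edge lies in the closed neighbourhoods of exactly two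
edges of the first matching `M₁`, except the edges of `M₁` themselves, which lie in one; summing
the domination condition over `M₁` gives `5 ≤ 2 f(E) - f(M₁) ≤ 2 f(E) + 5`, so `f(E) ≥ 0`. -/

open scoped Classical

theorem connected_induce_of_path {V : Type*} (G : SimpleGraph V) {T : Set V} (p : ℕ → V) (m : ℕ)
    (hadj : ∀ k < m, G.Adj (p k) (p (k + 1))) (hmem : ∀ k ≤ m, p k ∈ T)
    (hcover : ∀ v ∈ T, ∃ k ≤ m, p k = v) : (G.induce T).Connected := by
  have reach : ∀ k (hk : k ≤ m),
      (G.induce T).Reachable ⟨p 0, hmem 0 m.zero_le⟩ ⟨p k, hmem k hk⟩ := by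
    intro k
    induction k with
    | zero => exact fun _ => .rfl
    | succ k ih =>
      exact fun hk => (ih (by omega)).trans (SimpleGraph.Adj.reachable (hadj k (by omega)))
  have : Nonempty T := ⟨⟨p 0, hmem 0 m.zero_le⟩⟩
  refine ⟨fun u v => ?_⟩
  obtain ⟨i, hi, hu⟩ := hcover u u.2
  obtain ⟨j, hj, hv⟩ := hcover v v.2
  obtain rfl : u = ⟨p i, hmem i hi⟩ := Subtype.ext hu.symm
  obtain rfl : v = ⟨p j, hmem j hj⟩ := Subtype.ext hv.symm
  exact (reach i hi).symm.trans (reach j hj)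

section HamiltonianCycle

variable {V : Type*} (G : SimpleGraph V) {n : ℕ} (c : ZMod (n + 3) ≃ V)

theorem connected_induce_compl_singleton_of_hamiltonian_cycle
    (hadj : ∀ i, G.Adj (c i) (c (i + 1))) (a : V) : (G.induce {a}ᶜ).Connected := by
  set j := c.symm a
  refine connected_induce_of_path G (fun k => c (j + 1 + k)) (n + 1)
    (fun k _ => ?_) (fun k hk => ?_) fun v hv => ?_
  · simpa [add_assoc] using hadj (j + 1 + k)
  · rw [Set.mem_compl_singleton_iff, ← c.apply_symm_apply a, c.injective.ne_iff]
    intro h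
    have : ((k + 1 : ℕ) : ZMod (n + 3)) = 0 := by
      push_cast
      linear_combination h
    rw [ZMod.natCast_eq_zero_iff] at this
    have := Nat.le_of_dvd (by omega) this
    omega
  · set k := (c.symm v - j - 1).val
    have hk : ((k + 1 : ℕ) : ZMod (n + 3)) = c.symm v - j := by
      push_cast
      rw [ZMod.natCast_zmod_val]
      ring
    refine ⟨k, ?_, ?_⟩
    · have := (c.symm v - j - 1).val_lt
      by_contra hlast
      rw [show k + 1 = n + 3 by omega, ZMod.natCast_self, eq_comm, sub_eq_zero] at hk
      exact hv (c.symm.injective hk)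
    · simp only [k, ZMod.natCast_zmod_val]
      rw [show j + 1 + (c.symm v - j - 1) = c.symm v by ring, c.apply_symm_apply]

theorem mConnected_two_of_hamiltonian_cycle [Fintype V] (hadj : ∀ i, G.Adj (c i) (c (i + 1))) :
    MConnected 2 G := by
  refine ⟨by simp [← Fintype.card_congr c], fun S hS => ?_⟩
  obtain hS | hS : S.card = 0 ∨ S.card = 1 := by omega
  · rw [Finset.card_eq_zero.mp hS, Finset.coe_empty, Set.compl_empty]
    refine connected_induce_of_path G (fun k => c k) (n + 2) (fun k _ => ?_)
      (fun _ _ => trivial) fun v _ => ⟨(c.symm v).val, ?_, by simp⟩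
    · simpa using hadj k
    · have := (c.symm v).val_lt
      omega
  · obtain ⟨a, rfl⟩ := Finset.card_eq_one.mp hS
    rw [Finset.coe_singleton]
    exact connected_induce_compl_singleton_of_hamiltonian_cycle G c hadj a

end HamiltonianCycle

section SignedEdgeDomination

open Finset

variable {V : Type*} [Fintype V]

theorem closedNbhd_subset_edgeFin (G : SimpleGraph V) (e : Sym2 V) :
    closedNbhd G e ⊆ edgeFin G :=
  fun _ h => (mem_filter.mp h).1

variable {G : SimpleGraph V} {f : Sym2 V → ℤ}

theorem gammaS_eq_of_forall_le (hf : IsSEDF G f)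
    (hmin : ∀ g, IsSEDF G g → ∑ e ∈ edgeFin G, f e ≤ ∑ e ∈ edgeFin G, g e) :
    gammaS G = ∑ e ∈ edgeFin G, f e :=
  IsLeast.csInf_eq ⟨⟨f, hf, rfl⟩, by rintro _ ⟨g, hg, rfl⟩; exact hmin g hg⟩

theorem IsSEDF.card_le_sum_count_mul [DecidableEq V] (hf : IsSEDF G f) {F : Finset (Sym2 V)}
    (hF : F ⊆ edgeFin G) :
    (F.card : ℤ) ≤ ∑ e' ∈ edgeFin G, (#{e ∈ F | e' ∈ closedNbhd G e} : ℤ) * f e' :=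
  calc (F.card : ℤ) = ∑ _e ∈ F, 1 := by simp
    _ ≤ ∑ e ∈ F, ∑ e' ∈ closedNbhd G e, f e' := sum_le_sum fun e he => hf.2 e (hF he)
    _ = ∑ e' ∈ edgeFin G, ∑ e ∈ F, if e' ∈ closedNbhd G e then f e' else 0 := by
      rw [sum_comm]
      refine sum_congr rfl fun e _ => ?_
      rw [← sum_filter, filter_mem_eq_inter, inter_eq_right.mpr (closedNbhd_subset_edgeFin G e)]
    _ = _ := by
      refine sum_congr rfl fun e' _ => ?_
      rw [← sum_filter, sum_const, nsmul_eq_mul]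

theorem IsSEDF.sum_nonneg_of_double_cover [DecidableEq V] (hf : IsSEDF G f)
    {F : Finset (Sym2 V)} (hF : F ⊆ edgeFin G)
    (hcover : ∀ e' ∈ edgeFin G, #{e ∈ F | e' ∈ closedNbhd G e} = if e' ∈ F then 1 else 2) :
    0 ≤ ∑ e ∈ edgeFin G, f e := by
  have hcount := hf.card_le_sum_count_mul hF
  have hsplit : ∑ e' ∈ edgeFin G, (#{e ∈ F | e' ∈ closedNbhd G e} : ℤ) * f e' =
      2 * ∑ e ∈ edgeFin G, f e - ∑ e ∈ F, f e := by
    have hF_sum : ∑ e ∈ F, f e = ∑ e ∈ edgeFin G, if e ∈ F then f e else 0 := by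
      rw [sum_ite_mem, inter_eq_right.mpr hF]
    rw [hF_sum, mul_sum, ← sum_sub_distrib]
    refine sum_congr rfl fun e' he' => ?_
    rw [hcover e' he']
    split_ifs <;> push_cast <;> ring
  have hF_ge : -(F.card : ℤ) ≤ ∑ e ∈ F, f e :=
    calc -(F.card : ℤ) = ∑ _e ∈ F, -1 := by simp
      _ ≤ ∑ e ∈ F, f e := sum_le_sum fun e he => by rcases hf.1 e (hF he) with h | h <;> omega
  linarith

end SignedEdgeDomination

section L21Graph

open Finset SimpleGraph

def k5Edges : Finset (Sym2 (Fin 10)) :=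
  {s(0, 1), s(0, 2), s(0, 3), s(0, 4), s(1, 2), s(1, 3), s(1, 4), s(2, 3), s(2, 4), s(3, 4)}

def matching₁ : Finset (Sym2 (Fin 10)) := {s(0, 5), s(1, 6), s(2, 7), s(3, 8), s(4, 9)}

def matching₂ : Finset (Sym2 (Fin 10)) := {s(1, 5), s(2, 6), s(3, 7), s(4, 8), s(0, 9)}

def l21Edges : Finset (Sym2 (Fin 10)) := k5Edges ∪ matching₁ ∪ matching₂

def l21Graph : SimpleGraph (Fin 10) := fromEdgeSet l21Edges

instance : DecidableRel l21Graph.Adj := fun _ _ => decidable_of_iff _ (fromEdgeSet_adj _).symm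

theorem edgeFin_l21Graph : edgeFin l21Graph = l21Edges := by
  ext e
  have hdiag : ∀ e ∈ l21Edges, ¬e.IsDiag := by decide
  simp only [edgeFin, l21Graph, mem_filter, mem_univ, true_and, edgeSet_fromEdgeSet,
    Set.mem_sdiff, mem_coe, Sym2.mem_diagSet]
  exact ⟨And.left, fun he => ⟨he, hdiag e he⟩⟩

theorem closedNbhd_l21Graph (e : Sym2 (Fin 10)) :
    closedNbhd l21Graph e = l21Edges.filter fun e' => ∃ v, v ∈ e ∧ v ∈ e' := by
  ext e'
  simp only [closedNbhd, mem_filter, edgeFin_l21Graph]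

def balancedSigning (e : Sym2 (Fin 10)) : ℤ := if e ∈ k5Edges then 1 else -1

theorem isSEDF_balancedSigning : IsSEDF l21Graph balancedSigning := by
  refine ⟨?_, ?_⟩ <;> simp only [edgeFin_l21Graph, closedNbhd_l21Graph] <;> decide

theorem sum_balancedSigning : ∑ e ∈ edgeFin l21Graph, balancedSigning e = 0 := by
  rw [edgeFin_l21Graph]
  decide

theorem matching₁_double_cover : ∀ e' ∈ edgeFin l21Graph,
    #{e ∈ matching₁ | e' ∈ closedNbhd l21Graph e} = if e' ∈ matching₁ then 1 else 2 := by
  simp only [edgeFin_l21Graph, closedNbhd_l21Graph]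
  decide

theorem gammaS_l21Graph : gammaS l21Graph = 0 := by
  rw [gammaS_eq_of_forall_le isSEDF_balancedSigning, sum_balancedSigning]
  intro g hg
  rw [sum_balancedSigning]
  exact hg.sum_nonneg_of_double_cover (by rw [edgeFin_l21Graph]; decide) matching₁_double_cover

def l21Cycle : ZMod 10 ≃ Fin 10 where
  toFun := ![0, 5, 1, 6, 2, 7, 3, 8, 4, 9]
  invFun := ![0, 2, 4, 6, 8, 1, 3, 5, 7, 9]
  left_inv i := by fin_cases i <;> rfl
  right_inv i := by fin_cases i <;> rfl

theorem mConnected_two_l21Graph : MConnected 2 l21Graph :=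
  mConnected_two_of_hamiltonian_cycle (n := 7) l21Graph l21Cycle (by decide)

def l21Parts : Fin 2 → Finset (Fin 10) := ![{0, 1, 2, 3, 4}, {5, 6, 7, 8, 9}]

theorem isLGraph_l21Graph : IsLGraph 2 1 l21Graph := by
  have outer_degree : ∀ v ∈ l21Parts 1, #{u ∈ l21Parts 0 | l21Graph.Adj v u} = 2 := by decide
  have inner_degree : ∀ v ∈ l21Parts 0, #{u ∈ l21Parts 1 | l21Graph.Adj v u} = 2 := by decide
  have parts_cover : ∀ v, #{i | v ∈ l21Parts i} = 1 := by decide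
  refine ⟨rfl, l21Parts, fun v => (Fintype.existsUnique_iff_card_one _).mpr (parts_cover v),
    by decide, by decide, by decide, ?_, ?_, by decide⟩
  all_goals
    intro i hi v hv
    obtain rfl := Fin.eq_one_of_ne_zero i hi
  · convert outer_degree v hv
  · convert inner_degree v hv

end L21Graph

theorem stmt19 :
    ∃ G : SimpleGraph (Fin 10), MConnected 2 G ∧ IsLGraph 2 1 G ∧ gammaS G = 0 :=
  ⟨l21Graph, mConnected_two_l21Graph, isLGraph_l21Graph, gammaS_l21Graph⟩
end
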